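/- In the marked cycle on Z_k (k ≥ 4) with start 0, end x = ⌊k/2⌋, and all nodes marked (B = Z_k), every valid path has length at least k + ⌊k/2⌋ − 2, and there exists a valid path of exactly this length. -/

import Mathlib

/-- The four move types in the marked cycle. -/
inductive Move : Type
  | a | b | c | d
deriving DecidableEq

/-- Where a move from node `x` in `ZMod k` leads. -/
def Move.step {k : ℕ} (x : ZMod k) : Move → ZMod k
  | .a => x - 1
  | .b => x
  | .c => x + 1
  | .d => x

/-- The node covered by a move performed from node `x`. -/
def Move.covers {k : ℕ} (x : ZMod k) : Move → ZMod k
  | .a => x - 1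
  | .b => x
  | .c => x
  | .d => x - 1

/-- The node reached after performing a sequence of moves starting at `s`. -/
def endAt {k : ℕ} (s : ZMod k) : List Move → ZMod k
  | [] => s
  | m :: ms => endAt (Move.step s m) ms

/-- The set of nodes covered by a sequence of moves starting at `s`. -/
def coveredSet {k : ℕ} (s : ZMod k) : List Move → Set (ZMod k)
  | [] => ∅
  | m :: ms => insert (Move.covers s m) (coveredSet (Move.step s m) ms)

/-- A valid path in the marked cycle on `ZMod k` with marked set `B`, start `s`,
end `t`: a nonempty sequence of moves from `s` to `t` covering every node of `B`. -/
def ValidPath {k : ℕ} (B : Set (ZMod k)) (s t : ZMod k) (p : List Move) : Prop :=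
  p ≠ [] ∧ endAt s p = t ∧ B ⊆ coveredSet s p

/-- A shortest valid path: valid and of minimum length among all valid paths. -/
def ShortestPath {k : ℕ} (B : Set (ZMod k)) (s t : ZMod k) (p : List Move) : Prop :=
  ValidPath B s t p ∧ ∀ q : List Move, ValidPath B s t q → p.length ≤ q.length


/-!
Lift a path to the universal cover `ℤ` of the cycle, starting at `0` and ending at some lift `e`
of the end node. If the lifted positions fill `[lo, hi]`, the moves `a`, `c` cover only nodes of
`[lo, hi - 1]`, the moves `b`, `d` cover one node each, and every covered node lies in
`[lo - 1, hi]`. Covering all `k` residues therefore forces `hi - lo ≥ k - 2` and at least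
`k - (hi - lo)` moves `b`, `d`, while visiting both `lo` and `hi` between `0` and `e` takes at least
`2 (hi - lo) - |e|` moves `a`, `c`. Hence the length is at least `2k - 2 - |e|`, and also at least
`|e|`; over the lifts `e ≡ ⌊k/2⌋` this is minimal, `k + ⌊k/2⌋ - 2`, at `e = ⌊k/2⌋ - k`, which
`b a^(k-2) d c^(⌊k/2⌋-2)` attains.
-/

namespace Move

def shift : Move → ℤ
  | a => -1
  | b => 0
  | c => 1
  | d => 0

def offset : Move → ℤ
  | a => -1
  | b => 0
  | c => 0
  | d => -1

theorem step_eq_add_shift {k : ℕ} (x : ZMod k) (m : Move) : Move.step x m = x + m.shift := by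
  cases m <;> simp [Move.step, shift, sub_eq_add_neg]

theorem covers_eq_add_offset {k : ℕ} (x : ZMod k) (m : Move) : Move.covers x m = x + m.offset := by
  cases m <;> simp [Move.covers, offset, sub_eq_add_neg]

end Move

namespace MarkedCycle

def displacement (p : List Move) : ℤ := (p.map Move.shift).sum

def travel (p : List Move) : ℤ := (p.map fun m => |m.shift|).sum

def visited (y : ℤ) : List Move → Finset ℤ
  | [] => {y}
  | m :: ms => insert y (visited (y + m.shift) ms)

def covered (y : ℤ) : List Move → Set ℤ
  | [] => ∅
  | m :: ms => insert (y + m.offset) (covered (y + m.shift) ms)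

def stayCovers (y : ℤ) : List Move → List ℤ
  | [] => []
  | m :: ms =>
    if m.shift = 0 then (y + m.offset) :: stayCovers y ms else stayCovers (y + m.shift) ms

@[simp] theorem displacement_nil : displacement [] = 0 := rfl

@[simp] theorem displacement_cons (m : Move) (p : List Move) :
    displacement (m :: p) = m.shift + displacement p := by
  simp [displacement]

theorem displacement_append (p q : List Move) :
    displacement (p ++ q) = displacement p + displacement q := by
  simp [displacement]

theorem displacement_replicate (n : ℕ) (m : Move) :
    displacement (List.replicate n m) = n * m.shift := by
  simp [displacement]

@[simp] theorem travel_nil : travel [] = 0 := rfl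

@[simp] theorem travel_cons (m : Move) (p : List Move) :
    travel (m :: p) = |m.shift| + travel p := by
  simp [travel]

theorem endAt_intCast {k : ℕ} (y : ℤ) (p : List Move) :
    endAt (y : ZMod k) p = ((y + displacement p : ℤ) : ZMod k) := by
  induction p generalizing y with
  | nil => simp [endAt]
  | cons m p ih => simp [endAt, Move.step_eq_add_shift, ← Int.cast_add, ih, add_assoc]

theorem coveredSet_intCast {k : ℕ} (y : ℤ) (p : List Move) :
    coveredSet (y : ZMod k) p = Int.cast '' covered y p := by
  induction p generalizing y with
  | nil => simp [coveredSet, covered]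
  | cons m p ih =>
    simp [coveredSet, covered, Set.image_insert_eq, Move.step_eq_add_shift,
      Move.covers_eq_add_offset, ← ih]

theorem start_mem_visited (y : ℤ) : ∀ p : List Move, y ∈ visited y p
  | [] => Finset.mem_singleton_self y
  | _ :: _ => Finset.mem_insert_self y _

theorem abs_sub_add_abs_sub_le_travel {y v : ℤ} {p : List Move} (hv : v ∈ visited y p) :
    |v - y| + |y + displacement p - v| ≤ travel p := by
  induction p generalizing y v with
  | nil => simp_all [visited]
  | cons m p ih =>
    simp only [visited, Finset.mem_insert] at hv
    have htail := abs_sub_le v (y + m.shift) y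
    have hstep : |y + m.shift - y| = |m.shift| := by simp
    simp only [displacement_cons, travel_cons, ← add_assoc]
    rcases hv with rfl | hv
    · have := ih (start_mem_visited (v + m.shift) p)
      rw [sub_self, abs_zero, zero_add, add_sub_cancel_left] at this
      rw [sub_self, abs_zero, zero_add, show v + m.shift + displacement p - v
        = m.shift + displacement p by ring]
      linarith [abs_add_le m.shift (displacement p)]
    · have := ih hv
      linarith

theorem two_mul_abs_start_sub_le_travel_add {y w : ℤ} {p : List Move} (hw : w ∈ visited y p) :
    2 * |y - w| ≤ travel p + |displacement p| := by
  have := abs_sub_add_abs_sub_le_travel hw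
  have := abs_sub_le y (y + displacement p) w
  rw [abs_sub_comm w y, show y - (y + displacement p) = -displacement p by ring, abs_neg] at *
  linarith

theorem two_mul_abs_sub_le_travel_add {y u v : ℤ} {p : List Move} (hu : u ∈ visited y p)
    (hv : v ∈ visited y p) : 2 * |u - v| ≤ travel p + |displacement p| := by
  induction p generalizing y with
  | nil => simp_all [visited]
  | cons m p ih =>
    rcases Finset.mem_insert.1 hu with rfl | hu'
    · exact two_mul_abs_start_sub_le_travel_add hv
    rcases Finset.mem_insert.1 hv with rfl | hv'
    · rw [abs_sub_comm]; exact two_mul_abs_start_sub_le_travel_add hu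
    have := ih hu' hv'
    simp only [travel_cons, displacement_cons]
    have := abs_sub (m.shift + displacement p) m.shift
    rw [add_sub_cancel_left] at this
    linarith

theorem mem_visited_of_mem_stayCovers {y z : ℤ} {p : List Move} (hz : z ∈ stayCovers y p) :
    z ∈ visited y p ∨ z + 1 ∈ visited y p := by
  induction p generalizing y with
  | nil => simp [stayCovers] at hz
  | cons m p ih =>
    simp only [visited, Finset.mem_insert]
    rw [stayCovers] at hz
    split_ifs at hz with h
    · rcases List.mem_cons.1 hz with rfl | hz
      · cases m <;> simp_all [Move.shift, Move.offset]
      · rw [h, add_zero]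
        have := ih hz
        tauto
    · have := ih hz
      tauto

theorem mem_stayCovers_or_of_mem_covered {y z : ℤ} {p : List Move} (hz : z ∈ covered y p) :
    z ∈ stayCovers y p ∨ z ∈ visited y p ∧ z + 1 ∈ visited y p := by
  induction p generalizing y with
  | nil => simp [covered] at hz
  | cons m p ih =>
    simp only [visited, Finset.mem_insert, stayCovers]
    rcases Set.mem_insert_iff.1 hz with rfl | hz
    · split_ifs with h
      · exact Or.inl List.mem_cons_self
      · have := start_mem_visited (y + m.shift) p
        cases m <;> simp_all [Move.shift, Move.offset]
    · split_ifs with h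
      · rw [h, add_zero] at hz ⊢
        have := ih hz
        rw [List.mem_cons]
        tauto
      · have := ih hz
        tauto

theorem length_eq_travel_add (y : ℤ) (p : List Move) :
    (p.length : ℤ) = travel p + (stayCovers y p).length := by
  induction p generalizing y with
  | nil => rfl
  | cons m p ih =>
    rw [List.length_cons, travel_cons, stayCovers]
    split_ifs with h
    · rw [List.length_cons, h, abs_zero]
      push_cast
      linarith [ih y]
    · have : |m.shift| = 1 := by cases m <;> simp_all [Move.shift]
      rw [this]
      push_cast
      linarith [ih (y + m.shift)]

theorem abs_displacement_le_length (p : List Move) : |displacement p| ≤ p.length := by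
  have := abs_sub_add_abs_sub_le_travel (start_mem_visited 0 p)
  have := length_eq_travel_add 0 p
  simp only [sub_self, abs_zero, zero_add, sub_zero] at *
  omega

theorem le_card_of_surjOn_intCast {k : ℕ} {s : Finset ℤ}
    (h : Set.SurjOn (Int.cast : ℤ → ZMod k) s Set.univ) : k ≤ s.card :=
  calc k = (Set.univ : Set (ZMod k)).ncard := by rw [Set.ncard_univ, Nat.card_zmod]
    _ ≤ (Int.cast '' (s : Set ℤ) : Set (ZMod k)).ncard :=
      Set.ncard_le_ncard h (s.finite_toSet.image _)
    _ ≤ (s : Set ℤ).ncard := Set.ncard_image_le s.finite_toSet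
    _ = s.card := Set.ncard_coe_finset s

theorem surjOn_intCast_Ico {k : ℕ} [NeZero k] (a : ℤ) :
    Set.SurjOn (Int.cast : ℤ → ZMod k) (Set.Ico a (a + k)) Set.univ := by
  intro v _
  have hk : (0 : ℤ) < k := by exact_mod_cast Nat.pos_of_ne_zero (NeZero.ne k)
  refine ⟨a + ((v.val : ℤ) - a) % k, ⟨?_, ?_⟩, ?_⟩
  · linarith [Int.emod_nonneg ((v.val : ℤ) - a) hk.ne']
  · linarith [Int.emod_lt_of_pos ((v.val : ℤ) - a) hk]
  · rw [Int.cast_add, ZMod.intCast_mod]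
    simp

theorem covered_subset_Icc {y lo hi : ℤ} {p : List Move}
    (hV : (visited y p : Set ℤ) ⊆ Set.Icc lo hi) : covered y p ⊆ Set.Icc (lo - 1) hi := by
  intro z hz
  have : z ∈ visited y p ∨ z + 1 ∈ visited y p := by
    rcases mem_stayCovers_or_of_mem_covered hz with hz | ⟨hz, -⟩
    exacts [mem_visited_of_mem_stayCovers hz, Or.inl hz]
  rcases this with hz | hz <;> have := hV hz <;> simp only [Set.mem_Icc] at * <;> omega

theorem covered_subset_Ico_union_stayCovers {y lo hi : ℤ} {p : List Move}
    (hV : (visited y p : Set ℤ) ⊆ Set.Icc lo hi) :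
    covered y p ⊆ Set.Ico lo hi ∪ {z | z ∈ stayCovers y p} := by
  intro z hz
  rcases mem_stayCovers_or_of_mem_covered hz with hz | ⟨hz, hz'⟩
  · exact Or.inr hz
  · have := hV hz
    have := hV hz'
    simp only [Set.mem_Icc] at *
    exact Or.inl ⟨by omega, by omega⟩

theorem two_mul_le_length_add_abs_displacement {k : ℕ} (y : ℤ) (p : List Move)
    (hcov : Set.univ ⊆ coveredSet (y : ZMod k) p) :
    2 * (k : ℤ) ≤ p.length + |displacement p| + 2 := by
  rw [coveredSet_intCast] at hcov
  have hV : (visited y p).Nonempty := ⟨y, start_mem_visited y p⟩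
  set lo := (visited y p).min' hV
  set hi := (visited y p).max' hV
  have h_range : (visited y p : Set ℤ) ⊆ Set.Icc lo hi :=
    fun z hz => ⟨Finset.min'_le _ z hz, Finset.le_max' _ z hz⟩
  have h_window : k ≤ (Finset.Icc (lo - 1) hi).card := by
    refine le_card_of_surjOn_intCast (Set.SurjOn.mono ?_ subset_rfl hcov)
    rw [Finset.coe_Icc]
    exact covered_subset_Icc h_range
  have h_stays : k ≤ (Finset.Ico lo hi ∪ (stayCovers y p).toFinset).card := by
    refine le_card_of_surjOn_intCast (Set.SurjOn.mono ?_ subset_rfl hcov)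
    rw [Finset.coe_union, Finset.coe_Ico, List.coe_toFinset]
    exact covered_subset_Ico_union_stayCovers h_range
  have h_lo_le_hi : lo ≤ hi := Finset.min'_le_max' _ hV
  have h_travel : 2 * (hi - lo) ≤ travel p + |displacement p| := by
    have := two_mul_abs_sub_le_travel_add (Finset.max'_mem _ hV) (Finset.min'_mem _ hV)
    rwa [abs_of_nonneg (sub_nonneg.2 h_lo_le_hi)] at this
  have h_union := (Finset.card_union_le _ _).trans' h_stays
  have := List.toFinset_card_le (stayCovers y p)
  rw [Int.card_Icc] at h_window
  rw [Int.card_Ico] at h_union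
  rw [length_eq_travel_add y p]
  omega

theorem covered_append (y : ℤ) (q r : List Move) :
    covered y (q ++ r) = covered y q ∪ covered (y + displacement q) r := by
  induction q generalizing y with
  | nil => simp [covered]
  | cons m q ih => simp [covered, ih, add_assoc, Set.insert_union]

theorem covered_replicate_a (y : ℤ) (n : ℕ) :
    covered y (List.replicate n .a) = Set.Ico (y - n) y := by
  induction n generalizing y with
  | zero => simp [covered]
  | succ n ih =>
    ext z
    simp only [List.replicate_succ, covered, ih, Move.shift, Move.offset, Set.mem_insert_iff,
      Set.mem_Ico, Nat.cast_add, Nat.cast_one]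
    omega

theorem Ico_subset_covered_b_replicate_a_d (y : ℤ) (n : ℕ) (r : List Move) :
    Set.Ico (y - n - 1) (y + 1) ⊆ covered y (.b :: List.replicate n .a ++ .d :: r) := by
  rintro z ⟨hlo, hhi⟩
  simp only [List.cons_append, covered, covered_append, covered_replicate_a, displacement_replicate,
    Set.mem_insert_iff, Set.mem_union, Set.mem_Ico, Move.offset, Move.shift]
  omega

theorem exists_validPath_univ_length (k : ℕ) (hk : 4 ≤ k) :
    ∃ p : List Move, ValidPath Set.univ (0 : ZMod k) ((k / 2 : ℕ) : ZMod k) p ∧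
      p.length = k + k / 2 - 2 := by
  have : NeZero k := ⟨by omega⟩
  refine ⟨.b :: List.replicate (k - 2) .a ++ .d :: List.replicate (k / 2 - 2) .c,
    ⟨by simp, ?_, ?_⟩, ?_⟩
  · rw [← Int.cast_zero, endAt_intCast, ← Int.cast_natCast, ZMod.intCast_eq_intCast_iff_dvd_sub]
    simp only [List.cons_append, displacement_cons, displacement_append, displacement_replicate,
      Move.shift]
    exact ⟨1, by omega⟩
  · rw [← Int.cast_zero, coveredSet_intCast]
    refine Set.SurjOn.mono (Ico_subset_covered_b_replicate_a_d 0 (k - 2) _) subset_rfl ?_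
    convert surjOn_intCast_Ico (k := k) (1 - k) using 2 <;>
      push_cast [Nat.cast_sub (by omega : 2 ≤ k)] <;> ring
  · simp only [List.cons_append, List.length_cons, List.length_append, List.length_replicate]
    omega

theorem add_half_sub_two_le {k : ℕ} {e L : ℤ} (he : (k : ℤ) ∣ e - (k / 2 : ℕ)) (hL : |e| ≤ L)
    (hcov : 2 * (k : ℤ) ≤ L + |e| + 2) : (k : ℤ) + (k / 2 : ℕ) - 2 ≤ L := by
  obtain ⟨j, hj⟩ := he
  have hh : 2 * ((k / 2 : ℕ) : ℤ) ≤ k ∧ (k : ℤ) ≤ 2 * (k / 2 : ℕ) + 1 := by omega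
  have hk : (0 : ℤ) ≤ k := by positivity
  rcases (by omega : 1 ≤ j ∨ j = 0 ∨ j = -1 ∨ j ≤ -2) with hj' | rfl | rfl | hj' <;>
    rcases abs_cases e with ⟨_, _⟩ | ⟨_, _⟩ <;> nlinarith

end MarkedCycle

/-- for k ≥ 4, start 0, end ⌊k/2⌋, all nodes marked: every valid path
has length at least k + ⌊k/2⌋ − 2, and a valid path of exactly this length exists. -/
theorem worst_case_path (k : ℕ) (hk : 4 ≤ k) :
    (∀ p : List Move,
      ValidPath (Set.univ : Set (ZMod k)) 0 ((k / 2 : ℕ) : ZMod k) p →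
        k + k / 2 - 2 ≤ p.length) ∧
    ∃ p : List Move,
      ValidPath (Set.univ : Set (ZMod k)) 0 ((k / 2 : ℕ) : ZMod k) p ∧
      p.length = k + k / 2 - 2 := by
  refine ⟨fun p ⟨_, hend, hcov⟩ => ?_, MarkedCycle.exists_validPath_univ_length k hk⟩
  rw [← Int.cast_zero, MarkedCycle.endAt_intCast, zero_add, ← Int.cast_natCast,
    ZMod.intCast_eq_intCast_iff_dvd_sub] at hend
  rw [← Int.cast_zero] at hcov
  have := MarkedCycle.add_half_sub_two_le (dvd_sub_comm.1 hend)
    (MarkedCycle.abs_displacement_le_length p)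
    (MarkedCycle.two_mul_le_length_add_abs_displacement 0 p hcov)
  omega
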